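/- Clean-up lemma: let Γ and Σ be two multisets of clauses of a MaxSAT instance and let D₁,…,D_t be a cost-SR derivation from Γ. If either (1) no variable occurring in Σ occurs in Γ∪{D₁,…,D_t}, or (2) for every clause C ∈ Σ there is a clause C' ∈ Γ with C' ⊆ C, then D₁,…,D_t is also a valid cost-SR derivation from Γ∪Σ. -/

import Mathlib

namespace PaperMaxSAT

/-- Variables are natural numbers. -/
abbrev Var := ℕ

/-- A literal is a variable together with a polarity. -/
abbrev Lit := Var × Bool

/-- Negation of a literal. -/
def negLit (l : Lit) : Lit := (l.1, !l.2)

/-- A clause is a finite set of literals. -/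
abbrev Clause := Finset Lit

/-- A CNF formula is a finite multiset of clauses. -/
abbrev CNF := Multiset Clause

/-- A tautological clause contains a literal together with its negation. -/
def isTaut (C : Clause) : Prop := ∃ l ∈ C, negLit l ∈ C

/-- The value of a substitution at a variable: a Boolean constant or a literal. -/
abbrev SubVal := Bool ⊕ Lit

/-- Negation on substitution values. -/
def negSV : SubVal → SubVal
  | .inl b => .inl !b
  | .inr l => .inr (negLit l)

/-- A substitution maps each variable to `0`, `1` or a literal. -/
abbrev Sub := Var → SubVal

/-- Applying a substitution to a literal, respecting `σ(¬x) = ¬σ(x)`. -/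
def appLit (σ : Sub) (l : Lit) : SubVal :=
  if l.2 then σ l.1 else negSV (σ l.1)

/-- The identity substitution. -/
def idSub : Sub := fun v => .inr (v, true)

/-- `σ(C) = 1` : some literal of `C` is mapped to true by `σ`. -/
def clauseTrue (σ : Sub) (C : Clause) : Prop := ∃ l ∈ C, appLit σ l = Sum.inl true

instance (σ : Sub) (C : Clause) : Decidable (clauseTrue σ C) := by
  unfold clauseTrue; infer_instance

/-- `C↾σ` : the clause whose literals are the images under `σ` of the literals
of `C` mapped to literals (literals mapped to `0` are dropped). -/
def restrictClause (σ : Sub) (C : Clause) : Clause :=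
  C.biUnion (fun l => match appLit σ l with
    | .inr m => {m}
    | _ => (∅ : Clause))

/-- `Γ↾σ` : restrict every clause of `Γ`; clauses mapped to `1` are removed. -/
def restrictCNF (σ : Sub) (Γ : CNF) : CNF :=
  (Γ.filter (fun C => ¬ clauseTrue σ C)).map (restrictClause σ)

/-- `σ ⊨ C` : `σ(C) = 1` or `σ(C)` is tautological. -/
def subSat (σ : Sub) (C : Clause) : Prop :=
  clauseTrue σ C ∨ isTaut (restrictClause σ C)

/-- The assignment `¬C`, setting all literals of `C` to false. -/
def negSub (C : Clause) : Sub := fun v =>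
  if (v, true) ∈ C then .inl false
  else if (v, false) ∈ C then .inl true
  else .inr (v, true)

/-- The substitution setting the literal `l` to true and touching nothing else. -/
def litSub (l : Lit) : Sub := fun v => if v = l.1 then .inl l.2 else .inr (v, true)

/-- Unit propagation derives the empty clause. -/
inductive UPFalse : CNF → Prop
  | empty {Γ : CNF} : (∅ : Clause) ∈ Γ → UPFalse Γ
  | step {Γ : CNF} (l : Lit) : ({l} : Clause) ∈ Γ →
      UPFalse (restrictCNF (litSub l) Γ) → UPFalse Γ

/-- The unit clauses `¬l` for `l ∈ C`. -/
def negUnits (C : Clause) : CNF := C.val.map (fun l => ({negLit l} : Clause))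

/-- `Γ ⊢₁ C` : unit propagation on `Γ↾¬C` produces the empty clause. -/
def UPimplies (Γ : CNF) (C : Clause) : Prop := UPFalse (Γ + negUnits C)

/-- `Γ ⊢₁ Δ` : `Γ ⊢₁ D` for every `D ∈ Δ`. -/
def UPimpliesAll (Γ Δ : CNF) : Prop := ∀ D ∈ Δ, UPimplies Γ D

/-- Total assignments. -/
abbrev TAssign := Var → Bool

/-- A total assignment satisfies a clause. -/
def satC (α : TAssign) (C : Clause) : Prop := ∃ l ∈ C, α l.1 = l.2

instance (α : TAssign) (C : Clause) : Decidable (satC α C) := by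
  unfold satC; infer_instance

/-- A total assignment satisfies a CNF. -/
def satCNF (α : TAssign) (Γ : CNF) : Prop := ∀ C ∈ Γ, satC α C

/-- `τ ∘ σ` : composition of a total assignment with a substitution. -/
def comp (τ : TAssign) (σ : Sub) : TAssign := fun v =>
  match σ v with
  | .inl b => b
  | .inr l => if l.2 then τ l.1 else !(τ l.1)

/-- `τ` extends the assignment `¬C`. -/
def extendsNeg (τ : TAssign) (C : Clause) : Prop := ∀ l ∈ C, τ l.1 = !l.2

/-- The cost of a total assignment w.r.t. a set `B` of blocking variables:
the number of blocking variables set to true. -/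
def cost (B : Finset Var) (α : TAssign) : ℕ := (B.filter (fun b => α b = true)).card

/-- The cost of a MaxSAT instance encoded with blocking variables `B`:
the minimum cost of a satisfying total assignment. -/
noncomputable def costCNF (B : Finset Var) (Γ : CNF) : ℕ :=
  sInf {k | ∃ α : TAssign, satCNF α Γ ∧ cost B α = k}

/-- `σ` witnesses that `C` is cost-SR w.r.t. `Γ` (with blocking variables `B`):
the redundancy condition `Γ↾¬C ⊢₁ (Γ ∪ {C})↾σ` and the cost condition. -/
def CostSRwit (B : Finset Var) (Γ : CNF) (C : Clause) (σ : Sub) : Prop :=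
  UPimpliesAll (restrictCNF (negSub C) Γ) (restrictCNF σ (C ::ₘ Γ)) ∧
  ∀ τ : TAssign, extendsNeg τ C → cost B (comp τ σ) ≤ cost B τ

/-- `C` is cost-SR w.r.t. `Γ`. -/
def CostSR (B : Finset Var) (Γ : CNF) (C : Clause) : Prop := ∃ σ, CostSRwit B Γ C σ

/-- A substitution which is an assignment: every value is `0`, `1`,
or the variable itself. -/
def isAssign (σ : Sub) : Prop :=
  ∀ v, σ v = .inl true ∨ σ v = .inl false ∨ σ v = .inr (v, true)

/-- The variables of a clause. -/
def varsClause (C : Clause) : Finset Var := C.image Prod.fst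

/-- The variables of a CNF. -/
def varsCNF (Γ : CNF) : Finset Var := (Γ.map varsClause).sup

/-- Membership in the domain of an assignment. -/
def subDom (σ : Sub) (v : Var) : Prop := ∃ b : Bool, σ v = .inl b

/-- `C` is cost-PR w.r.t. `Γ`: cost-SR witnessed by an assignment. -/
def CostPR (B : Finset Var) (Γ : CNF) (C : Clause) : Prop :=
  ∃ σ, CostSRwit B Γ C σ ∧ isAssign σ

/-- `C` is cost-SPR w.r.t. `Γ`: cost-SR witnessed by an assignment with
domain `dom(¬C) = Var(C)`. -/
def CostSPR (B : Finset Var) (Γ : CNF) (C : Clause) : Prop :=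
  ∃ σ, CostSRwit B Γ C σ ∧ isAssign σ ∧ (∀ v, subDom σ v ↔ v ∈ varsClause C)

/-- `C` is cost-LPR w.r.t. `Γ`: cost-SR witnessed by an assignment with
domain `dom(¬C)` differing from `¬C` on exactly one variable. -/
def CostLPR (B : Finset Var) (Γ : CNF) (C : Clause) : Prop :=
  ∃ σ, CostSRwit B Γ C σ ∧ isAssign σ ∧ (∀ v, subDom σ v ↔ v ∈ varsClause C) ∧
    ((varsClause C).filter (fun v => σ v ≠ negSub C v)).card = 1

/-- `D` is a resolvent of `E₁` and `E₂`. -/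
def resolvent (D E₁ E₂ : Clause) : Prop :=
  ∃ x : Var, (x, true) ∈ E₁ ∧ (x, false) ∈ E₂ ∧
    D = E₁.erase (x, true) ∪ E₂.erase (x, false)

/-- A derivation from `Γ` in the calculus with redundancy rule `Red`:
every clause of the list is in `Γ`, a weakening of an earlier clause,
a resolvent of two earlier clauses, or redundant (w.r.t. `Red`) relative to
`Γ` together with the earlier clauses, using no new variables. -/
def IsDeriv (Red : Finset Var → CNF → Clause → Prop) (B : Finset Var) (Γ : CNF)
    (L : List Clause) : Prop :=
  ∀ i, ∀ hi : i < L.length,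
    L[i] ∈ Γ ∨
    (∃ j, ∃ hj : j < i, L[j]'(hj.trans hi) ⊆ L[i]) ∨
    (∃ j k, ∃ hj : j < i, ∃ hk : k < i,
      resolvent L[i] (L[j]'(hj.trans hi)) (L[k]'(hk.trans hi))) ∨
    (Red B (Γ + (↑(L.take i) : CNF)) L[i] ∧ varsClause L[i] ⊆ varsCNF Γ)

/-- `C ∨ ℓ` is a cost blocked clause (cost-BC) w.r.t. `Γ` and `ℓ`. -/
def CostBC (B : Finset Var) (Γ : CNF) (C : Clause) (l : Lit) : Prop :=
  (∀ D ∈ Γ, negLit l ∈ D → isTaut (C ∪ D.erase (negLit l))) ∧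
  ¬(l.2 = true ∧ l.1 ∈ B)

/-- Hamming distance between two total assignments, over the variables in `V`. -/
def HD (V : Finset Var) (α β : TAssign) : ℕ := (V.filter (fun v => α v ≠ β v)).card

/-- `flip(C, σ) ≥ d` : some total assignment `τ` extending `¬C` has
Hamming distance (over `V`) at least `d` from `τ ∘ σ`. -/
def flipGE (V : Finset Var) (C : Clause) (σ : Sub) (d : ℕ) : Prop :=
  ∃ τ : TAssign, extendsNeg τ C ∧ d ≤ HD V τ (comp τ σ)


section CleanupLemmas

/-! ### Basic lemmas about restriction and membership -/

lemma mem_restrictClause {σ : Sub} {E : Clause} {x : Lit} :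
    x ∈ restrictClause σ E ↔ ∃ m ∈ E, appLit σ m = Sum.inr x := by
  unfold restrictClause
  simp only [Finset.mem_biUnion]
  constructor
  · rintro ⟨m, hm, hx⟩
    refine ⟨m, hm, ?_⟩
    rcases h : appLit σ m with b | l
    · rw [h] at hx; simp at hx
    · rw [h] at hx; simp at hx; rw [hx]
  · rintro ⟨m, hm, h⟩
    exact ⟨m, hm, by rw [h]; simp⟩

lemma restrictCNF_add (σ : Sub) (A A' : CNF) :
    restrictCNF σ (A + A') = restrictCNF σ A + restrictCNF σ A' := by
  simp [restrictCNF, Multiset.filter_add]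

lemma restrictCNF_mono (σ : Sub) {A A' : CNF} (h : A ≤ A') :
    restrictCNF σ A ≤ restrictCNF σ A' :=
  Multiset.map_le_map (Multiset.filter_le_filter _ h)

lemma mem_restrictCNF {σ : Sub} {C : Clause} {Γ : CNF} (hC : C ∈ Γ)
    (hT : ¬ clauseTrue σ C) : restrictClause σ C ∈ restrictCNF σ Γ :=
  Multiset.mem_map_of_mem _ (Multiset.mem_filter.2 ⟨hC, hT⟩)

lemma mem_restrictCNF_iff {σ : Sub} {D : Clause} {Γ : CNF} :
    D ∈ restrictCNF σ Γ ↔ ∃ E ∈ Γ, ¬ clauseTrue σ E ∧ restrictClause σ E = D := by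
  unfold restrictCNF
  simp only [Multiset.mem_map, Multiset.mem_filter]
  constructor
  · rintro ⟨E, ⟨hE, hT⟩, rfl⟩; exact ⟨E, hE, hT, rfl⟩
  · rintro ⟨E, hE, hT, rfl⟩; exact ⟨E, ⟨hE, hT⟩, rfl⟩

lemma UPFalse_mono : ∀ {Γ : CNF}, UPFalse Γ → ∀ {Γ' : CNF}, Γ ≤ Γ' → UPFalse Γ' := by
  intro Γ h
  induction h with
  | empty hmem => intro Γ' hle; exact UPFalse.empty (Multiset.mem_of_le hle hmem)
  | step l hmem _ ih =>
      intro Γ' hle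
      exact UPFalse.step l (Multiset.mem_of_le hle hmem) (ih (restrictCNF_mono _ hle))

/-! ### appLit computations -/

lemma appLit_of_id {σ : Sub} {m : Lit} (h : σ m.1 = Sum.inr (m.1, true)) :
    appLit σ m = Sum.inr m := by
  obtain ⟨v, b⟩ := m
  cases b <;> simp [appLit, h, negSV, negLit]

lemma not_clauseTrue_of_id {σ : Sub} {E : Clause}
    (h : ∀ m ∈ E, σ m.1 = Sum.inr (m.1, true)) : ¬ clauseTrue σ E := by
  rintro ⟨l, hl, hval⟩
  rw [appLit_of_id (h l hl)] at hval
  exact absurd hval (by simp)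

lemma restrictClause_of_id {σ : Sub} {E : Clause}
    (h : ∀ m ∈ E, σ m.1 = Sum.inr (m.1, true)) : restrictClause σ E = E := by
  ext x
  rw [mem_restrictClause]
  constructor
  · rintro ⟨m, hm, hx⟩
    rw [appLit_of_id (h m hm)] at hx
    rwa [← Sum.inr.inj hx]
  · intro hx
    exact ⟨x, hx, appLit_of_id (h x hx)⟩

lemma restrictCNF_of_id {σ : Sub} {Γ : CNF}
    (h : ∀ E ∈ Γ, ∀ m ∈ E, σ m.1 = Sum.inr (m.1, true)) : restrictCNF σ Γ = Γ := by
  unfold restrictCNF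
  rw [Multiset.filter_eq_self.2 (fun E hE => not_clauseTrue_of_id (h E hE))]
  calc Γ.map (restrictClause σ) = Γ.map id :=
        Multiset.map_congr rfl (fun E hE => restrictClause_of_id (h E hE))
    _ = Γ := Multiset.map_id Γ

/-! ### Variables -/

lemma mem_varsClause {v : Var} {C : Clause} : v ∈ varsClause C ↔ ∃ b, (v, b) ∈ C := by
  unfold varsClause
  simp only [Finset.mem_image]
  constructor
  · rintro ⟨⟨w, b⟩, h, rfl⟩; exact ⟨b, h⟩
  · rintro ⟨b, h⟩; exact ⟨(v, b), h, rfl⟩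

lemma mem_varsCNF {v : Var} {Γ : CNF} :
    v ∈ varsCNF Γ ↔ ∃ C ∈ Γ, v ∈ varsClause C := by
  unfold varsCNF
  induction Γ using Multiset.induction_on with
  | empty => simp
  | cons a s ih =>
      simp only [Multiset.map_cons, Multiset.sup_cons, Finset.sup_eq_union,
        Finset.mem_union, ih, Multiset.mem_cons]
      constructor
      · rintro (h | ⟨C, hC, hvC⟩)
        · exact ⟨a, Or.inl rfl, h⟩
        · exact ⟨C, Or.inr hC, hvC⟩
      · rintro ⟨C, (rfl | hC), hvC⟩
        · exact Or.inl hvC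
        · exact Or.inr ⟨C, hC, hvC⟩

lemma varsClause_subset {C : Clause} {Γ : CNF} (h : C ∈ Γ) :
    varsClause C ⊆ varsCNF Γ :=
  fun v hv => mem_varsCNF.2 ⟨C, h, hv⟩

lemma varsCNF_mono {Γ Γ' : CNF} (h : Γ ≤ Γ') : varsCNF Γ ⊆ varsCNF Γ' := by
  intro v hv
  rcases mem_varsCNF.1 hv with ⟨C, hC, hvC⟩
  exact mem_varsCNF.2 ⟨C, Multiset.mem_of_le h hC, hvC⟩

lemma mem_varsClause_of_mem {m : Lit} {C : Clause} (h : m ∈ C) : m.1 ∈ varsClause C :=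
  mem_varsClause.2 ⟨m.2, h⟩

end CleanupLemmas

section CleanupLemmas2

/-! ### Tame substitutions -/

/-- A substitution value which is either a constant or the identity. -/
def tameAt (σ : Sub) (v : Var) : Prop :=
  σ v = Sum.inr (v, true) ∨ ∃ b, σ v = Sum.inl b

lemma appLit_tame {σ : Sub} {m : Lit} (h : tameAt σ m.1) :
    ∀ l : Lit, appLit σ m = Sum.inr l → l = m := by
  intro l hl
  rcases h with h | ⟨b, h⟩
  · rw [appLit_of_id h] at hl
    exact (Sum.inr.inj hl).symm
  · obtain ⟨v, p⟩ := m
    cases p <;> simp [appLit, h, negSV] at hl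

lemma restrictClause_subset_of_tame {σ : Sub} {E : Clause}
    (h : ∀ m ∈ E, tameAt σ m.1) : restrictClause σ E ⊆ E := by
  intro x hx
  rcases mem_restrictClause.1 hx with ⟨m, hm, hx⟩
  rw [appLit_tame (h m hm) x hx]
  exact hm

lemma varsCNF_restrict_subset {σ : Sub} {Γ : CNF} (h : ∀ v, tameAt σ v) :
    varsCNF (restrictCNF σ Γ) ⊆ varsCNF Γ := by
  intro v hv
  rcases mem_varsCNF.1 hv with ⟨D, hD, hvD⟩
  rcases mem_restrictCNF_iff.1 hD with ⟨E, hE, _, rfl⟩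
  rcases mem_varsClause.1 hvD with ⟨b, hb⟩
  exact mem_varsCNF.2 ⟨E, hE,
    mem_varsClause_of_mem (restrictClause_subset_of_tame (fun m _ => h m.1) hb)⟩

lemma litSub_tame (l : Lit) (v : Var) : tameAt (litSub l) v := by
  unfold tameAt litSub
  split
  · exact Or.inr ⟨_, rfl⟩
  · exact Or.inl rfl

lemma negSub_tame (C : Clause) (v : Var) : tameAt (negSub C) v := by
  unfold tameAt negSub
  split
  · exact Or.inr ⟨_, rfl⟩
  · split
    · exact Or.inr ⟨_, rfl⟩
    · exact Or.inl rfl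

lemma litSub_id {l : Lit} {v : Var} (h : v ≠ l.1) : litSub l v = Sum.inr (v, true) := by
  simp [litSub, h]

lemma negSub_id {C : Clause} {v : Var} (h : v ∉ varsClause C) :
    negSub C v = Sum.inr (v, true) := by
  have h1 : (v, true) ∉ C := fun hc => h (mem_varsClause.2 ⟨true, hc⟩)
  have h2 : (v, false) ∉ C := fun hc => h (mem_varsClause.2 ⟨false, hc⟩)
  simp [negSub, h1, h2]

lemma negLit_negLit (l : Lit) : negLit (negLit l) = l := by
  obtain ⟨v, b⟩ := l; cases b <;> rfl

lemma appLit_litSub_self (l : Lit) : appLit (litSub l) l = Sum.inl true := by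
  obtain ⟨v, b⟩ := l; cases b <;> simp [appLit, litSub, negSV]

lemma appLit_litSub_neg (l : Lit) : appLit (litSub l) (negLit l) = Sum.inl false := by
  obtain ⟨v, b⟩ := l; cases b <;> simp [appLit, litSub, negLit, negSV]

lemma appLit_litSub_neg' (l : Lit) : appLit (litSub (negLit l)) l = Sum.inl false := by
  obtain ⟨v, b⟩ := l; cases b <;> simp [appLit, litSub, negLit, negSV]

lemma eq_or_eq_negLit_of_fst_eq {m l : Lit} (h : m.1 = l.1) : m = l ∨ m = negLit l := by
  obtain ⟨v, b⟩ := m; obtain ⟨w, c⟩ := l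
  simp only at h; subst h
  cases b <;> cases c <;> simp [negLit]

/-! ### negUnits -/

lemma negUnits_mono {D D' : Clause} (h : D ⊆ D') : negUnits D ≤ negUnits D' :=
  Multiset.map_le_map (Finset.val_le_iff.2 h)

lemma mem_negUnits {D : Clause} {m : Lit} (h : m ∈ D) :
    ({negLit m} : Clause) ∈ negUnits D :=
  Multiset.mem_map_of_mem _ h

/-! ### Self-subsumption unit propagation -/

lemma UPFalse_self_aux : ∀ (n : ℕ) (E : Clause), E.card = n → ∀ Γ : CNF, E ∈ Γ →
    (∀ m ∈ E, ({negLit m} : Clause) ∈ Γ) → UPFalse Γ := by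
  intro n
  induction n with
  | zero =>
      intro E hE Γ hEΓ _
      rw [Finset.card_eq_zero] at hE
      subst hE
      exact UPFalse.empty hEΓ
  | succ n ih =>
      intro E hE Γ hEΓ hunits
      obtain ⟨l, hl⟩ : E.Nonempty := Finset.card_pos.1 (by omega)
      by_cases hneg : negLit l ∈ E
      · refine UPFalse.step (negLit l) (hunits l hl) (UPFalse.empty ?_)
        have hmem : ({l} : Clause) ∈ Γ := by
          have := hunits _ hneg
          rwa [negLit_negLit] at this
        have hct : ¬ clauseTrue (litSub (negLit l)) ({l} : Clause) := by
          rintro ⟨m, hm, hval⟩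
          rw [Finset.mem_singleton] at hm
          subst hm
          rw [appLit_litSub_neg'] at hval
          exact absurd hval (by simp)
        have heq : restrictClause (litSub (negLit l)) ({l} : Clause) = (∅ : Clause) := by
          ext x
          simp only [Finset.notMem_empty, iff_false]
          intro hx
          rcases mem_restrictClause.1 hx with ⟨m, hm, hx⟩
          rw [Finset.mem_singleton] at hm
          subst hm
          rw [appLit_litSub_neg'] at hx
          exact absurd hx (by simp)
        rw [← heq]
        exact mem_restrictCNF hmem hct
      · -- negLit l ∉ E
        have hvar : ∀ m ∈ E, m ≠ l → m.1 ≠ l.1 := by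
          intro m hm hml h1
          rcases eq_or_eq_negLit_of_fst_eq h1 with rfl | rfl
          · exact hml rfl
          · exact hneg hm
        refine UPFalse.step (negLit l) (hunits l hl) ?_
        have hct : ¬ clauseTrue (litSub (negLit l)) E := by
          rintro ⟨m, hm, hval⟩
          by_cases hml : m = l
          · subst hml
            rw [appLit_litSub_neg'] at hval
            exact absurd hval (by simp)
          · rw [appLit_of_id (litSub_id (by simpa [negLit] using hvar m hm hml))] at hval
            exact absurd hval (by simp)
        have heq : restrictClause (litSub (negLit l)) E = E.erase l := by
          ext x
          rw [mem_restrictClause, Finset.mem_erase]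
          constructor
          · rintro ⟨m, hm, hx⟩
            by_cases hml : m = l
            · subst hml
              rw [appLit_litSub_neg'] at hx
              exact absurd hx (by simp)
            · rw [appLit_of_id (litSub_id (by simpa [negLit] using hvar m hm hml))] at hx
              rw [← Sum.inr.inj hx]
              exact ⟨hml, hm⟩
          · rintro ⟨hxl, hx⟩
            exact ⟨x, hx, appLit_of_id (litSub_id (by simpa [negLit] using hvar x hx hxl))⟩
        apply ih (E.erase l) (by rw [Finset.card_erase_of_mem hl, hE]; rfl)
        · rw [← heq]
          exact mem_restrictCNF hEΓ hct
        · intro m hm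
          have hm' := Finset.mem_of_mem_erase hm
          have hmne : m ≠ l := (Finset.mem_erase.1 hm).1
          have hmv : m.1 ≠ l.1 := hvar m hm' hmne
          have hct2 : ¬ clauseTrue (litSub (negLit l)) ({negLit m} : Clause) := by
            apply not_clauseTrue_of_id
            intro m' hm'2
            rw [Finset.mem_singleton] at hm'2
            subst hm'2
            exact litSub_id (by simpa [negLit] using hmv)
          have heq2 : restrictClause (litSub (negLit l)) ({negLit m} : Clause)
              = ({negLit m} : Clause) := by
            apply restrictClause_of_id
            intro m' hm'2
            rw [Finset.mem_singleton] at hm'2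
            subst hm'2
            exact litSub_id (by simpa [negLit] using hmv)
          rw [← heq2]
          exact mem_restrictCNF (hunits m hm') hct2

lemma UPFalse_self {E : Clause} {Γ : CNF} (hE : E ∈ Γ)
    (hunits : ∀ m ∈ E, ({negLit m} : Clause) ∈ Γ) : UPFalse Γ :=
  UPFalse_self_aux E.card E rfl Γ hE hunits

end CleanupLemmas2

section CleanupLemmas3

lemma restrictCNF_litSub_id {l : Lit} {Δ : CNF} (h : l.1 ∉ varsCNF Δ) :
    restrictCNF (litSub l) Δ = Δ := by
  apply restrictCNF_of_id
  intro E hE m hm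
  apply litSub_id
  intro hv
  exact h (hv ▸ varsClause_subset hE (mem_varsClause_of_mem hm))

/-- Dropping unit clauses over fresh, pairwise distinct variables preserves
refutability by unit propagation. -/
lemma UPFalse_drop_units : ∀ {Γ : CNF}, UPFalse Γ → ∀ (Δ : CNF) (F : Finset Lit),
    Γ = Δ + F.val.map (fun l => ({negLit l} : Clause)) →
    (∀ l ∈ F, l.1 ∉ varsCNF Δ) →
    (∀ l ∈ F, ∀ l' ∈ F, l.1 = l'.1 → l = l') →
    UPFalse Δ := by
  intro Γ h
  induction h with
  | @empty Γ hmem =>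
      intro Δ F hΓ hvar _
      subst hΓ
      rcases Multiset.mem_add.1 hmem with h | h
      · exact UPFalse.empty h
      · rcases Multiset.mem_map.1 h with ⟨l, _, hl⟩
        exact absurd hl (by simp [Finset.eq_empty_iff_forall_notMem])
  | @step Γ m hmem _ ih =>
      intro Δ F hΓ hvar hinj
      subst hΓ
      rcases Multiset.mem_add.1 hmem with hΔ | hU
      · -- the unit comes from Δ
        have hmv : m.1 ∈ varsCNF Δ :=
          varsClause_subset hΔ (mem_varsClause_of_mem (Finset.mem_singleton_self m))
        refine UPFalse.step m hΔ ?_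
        refine ih (restrictCNF (litSub m) Δ) F ?_ ?_ hinj
        · rw [restrictCNF_add]
          congr 1
          apply restrictCNF_of_id
          intro E hE m' hm'
          rcases Multiset.mem_map.1 hE with ⟨l, hlF, rfl⟩
          rw [Finset.mem_singleton] at hm'
          subst hm'
          apply litSub_id
          intro hv
          apply hvar l hlF
          have : (negLit l).1 = l.1 := rfl
          rw [this] at hv
          exact hv ▸ hmv
        · intro l hl hmem'
          exact hvar l hl (varsCNF_restrict_subset (litSub_tame m) hmem')
      · -- the unit comes from F
        rcases Multiset.mem_map.1 hU with ⟨l, hlF, hl⟩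
        have hlF' : l ∈ F := hlF
        have hm : m = negLit l := Finset.singleton_injective hl.symm
        subst hm
        refine ih Δ (F.erase l) ?_ ?_ ?_
        · rw [restrictCNF_add]
          congr 1
          · exact restrictCNF_litSub_id (by
              have : (negLit l).1 = l.1 := rfl
              rw [this]; exact hvar l hlF')
          · -- restriction of the units
            have hF : F.val = l ::ₘ (F.erase l).val := by
              rw [Finset.erase_val]
              exact (Multiset.cons_erase (by exact hlF')).symm
            rw [hF, Multiset.map_cons, ← Multiset.singleton_add, restrictCNF_add]
            have h1 : restrictCNF (litSub (negLit l)) {({negLit l} : Clause)} = 0 := by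
              unfold restrictCNF
              rw [Multiset.filter_singleton, if_neg (by
                simp only [not_not]
                exact ⟨negLit l, Finset.mem_singleton_self _, appLit_litSub_self _⟩)]
              rfl
            have h2 : restrictCNF (litSub (negLit l)) ((F.erase l).val.map
                (fun l => ({negLit l} : Clause))) = (F.erase l).val.map
                (fun l => ({negLit l} : Clause)) := by
              apply restrictCNF_of_id
              intro E hE m' hm'
              rcases Multiset.mem_map.1 hE with ⟨l', hl'F, rfl⟩
              rw [Finset.mem_singleton] at hm'
              subst hm'
              apply litSub_id
              have hl'F2 : l' ∈ F.erase l := hl'F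
              have hne : l' ≠ l := (Finset.mem_erase.1 hl'F2).1
              intro hv
              exact hne (hinj l' (Finset.mem_of_mem_erase hl'F2) l hlF' hv)
            rw [h1, h2, zero_add]
        · intro l' hl'
          exact hvar l' (Finset.mem_of_mem_erase hl')
        · intro a ha b hb hab
          exact hinj a (Finset.mem_of_mem_erase ha) b (Finset.mem_of_mem_erase hb) hab

end CleanupLemmas3

section CleanupLemmas4

lemma restrictClause_mono {σ : Sub} {E E' : Clause} (h : E ⊆ E') :
    restrictClause σ E ⊆ restrictClause σ E' := by
  intro x hx
  rcases mem_restrictClause.1 hx with ⟨m, hm, hx⟩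
  exact mem_restrictClause.2 ⟨m, h hm, hx⟩

lemma clauseTrue_mono {σ : Sub} {E E' : Clause} (h : E ⊆ E') (ht : clauseTrue σ E) :
    clauseTrue σ E' := by
  rcases ht with ⟨l, hl, hval⟩
  exact ⟨l, h hl, hval⟩

/-- Adding subsumed clauses preserves being cost-SR. -/
lemma costSR_add_subsumed {B : Finset Var} {Γ Sig : CNF} {C : Clause}
    (hsub : ∀ E ∈ Sig, ∃ C' ∈ Γ, C' ⊆ E)
    (h : CostSR B Γ C) : CostSR B (Γ + Sig) C := by
  obtain ⟨σ, hUP, hcost⟩ := h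
  refine ⟨σ, ?_, hcost⟩
  intro D hD
  have hprem : restrictCNF (negSub C) Γ ≤ restrictCNF (negSub C) (Γ + Sig) :=
    restrictCNF_mono _ (Multiset.le_add_right _ _)
  rw [show C ::ₘ (Γ + Sig) = (C ::ₘ Γ) + Sig from (Multiset.cons_add C Γ Sig).symm,
    restrictCNF_add] at hD
  rcases Multiset.mem_add.1 hD with hD | hD
  · exact UPFalse_mono (hUP D hD) (add_le_add_left hprem _)
  · rcases mem_restrictCNF_iff.1 hD with ⟨E, hE, hT, rfl⟩
    obtain ⟨C', hC', hC'E⟩ := hsub E hE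
    have hT' : ¬ clauseTrue σ C' := fun ht => hT (clauseTrue_mono hC'E ht)
    have h1 : UPimplies (restrictCNF (negSub C) Γ) (restrictClause σ C') :=
      hUP _ (mem_restrictCNF (Multiset.mem_cons_of_mem hC') hT')
    exact UPFalse_mono h1
      (add_le_add hprem (negUnits_mono (restrictClause_mono hC'E)))

/-! ### Cost counting helpers -/

lemma cost_congr {B : Finset Var} {f g : TAssign} (h : ∀ b ∈ B, f b = g b) :
    cost B f = cost B g := by
  unfold cost
  congr 1
  apply Finset.filter_congr
  intro b hb
  rw [h b hb]

lemma cost_split (B : Finset Var) (p : Var → Prop) [DecidablePred p] (f : TAssign) :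
    cost B f = cost (B.filter p) f + cost (B.filter (fun b => ¬ p b)) f := by
  classical
  unfold cost
  have h1 : (Finset.filter p B).filter (fun b => f b = true)
      = (B.filter (fun b => f b = true)).filter p := Finset.filter_comm _ _ _
  have h2 : (Finset.filter (fun b => ¬ p b) B).filter (fun b => f b = true)
      = (B.filter (fun b => f b = true)).filter (fun b => ¬ p b) := Finset.filter_comm _ _ _
  rw [h1, h2, Finset.card_filter_add_card_filter_not p]

lemma cost_mono {B B' : Finset Var} (h : B ⊆ B') (f : TAssign) :
    cost B f ≤ cost B' f :=
  Finset.card_le_card (Finset.filter_subset_filter _ h)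

lemma cost_false (B : Finset Var) {f : TAssign} (h : ∀ b ∈ B, f b = false) :
    cost B f = 0 := by
  unfold cost
  rw [Finset.card_eq_zero, Finset.filter_eq_empty_iff]
  intro b hb
  simp [h b hb]

end CleanupLemmas4

section CleanupLemmas5

/-- The witness substitution cleaned outside `W`: identity outside `W`, and
literals over variables outside `W` are replaced by their value under the
all-false assignment. -/
def cleanSub (σ : Sub) (W : Finset Var) : Sub := fun v =>
  if v ∈ W then
    match σ v with
    | Sum.inr l => if l.1 ∈ W then Sum.inr l else Sum.inl (!l.2)
    | c => c
  else Sum.inr (v, true)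

lemma cleanSub_id {σ : Sub} {W : Finset Var} {v : Var} (h : v ∉ W) :
    cleanSub σ W v = Sum.inr (v, true) := by simp [cleanSub, h]

lemma appLit_cleanSub {σ : Sub} {W : Finset Var} {m : Lit} (hm : m.1 ∈ W) :
    appLit (cleanSub σ W) m =
      (match appLit σ m with
       | Sum.inl b => Sum.inl b
       | Sum.inr l => if l.1 ∈ W then Sum.inr l else Sum.inl (!l.2)) := by
  obtain ⟨v, p⟩ := m
  simp only at hm
  rcases hs : σ v with b | l
  · cases p <;> simp [appLit, cleanSub, hm, hs, negSV]
  · by_cases hl : l.1 ∈ W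
    · cases p <;> simp [appLit, cleanSub, hm, hs, hl, negSV, negLit]
    · cases p <;> simp [appLit, cleanSub, hm, hs, hl, negSV, negLit]

lemma appLit_cleanSub_inl {σ : Sub} {W : Finset Var} {m : Lit} {b : Bool}
    (hm : m.1 ∈ W) (h : appLit σ m = Sum.inl b) :
    appLit (cleanSub σ W) m = Sum.inl b := by
  rw [appLit_cleanSub hm, h]

lemma appLit_cleanSub_inr_mem {σ : Sub} {W : Finset Var} {m l : Lit}
    (hm : m.1 ∈ W) (h : appLit σ m = Sum.inr l) (hl : l.1 ∈ W) :
    appLit (cleanSub σ W) m = Sum.inr l := by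
  rw [appLit_cleanSub hm, h]; simp [hl]

lemma appLit_cleanSub_inr_not {σ : Sub} {W : Finset Var} {m l : Lit}
    (hm : m.1 ∈ W) (h : appLit σ m = Sum.inr l) (hl : l.1 ∉ W) :
    appLit (cleanSub σ W) m = Sum.inl (!l.2) := by
  rw [appLit_cleanSub hm, h]; simp [hl]

lemma clauseTrue_cleanSub_of {σ : Sub} {W : Finset Var} {E : Clause}
    (hE : ∀ m ∈ E, m.1 ∈ W) (h : ¬ clauseTrue (cleanSub σ W) E) :
    ¬ clauseTrue σ E := by
  rintro ⟨m, hm, hval⟩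
  exact h ⟨m, hm, appLit_cleanSub_inl (hE m hm) hval⟩

lemma restrictClause_cleanSub {σ : Sub} {W : Finset Var} {E : Clause}
    (hE : ∀ m ∈ E, m.1 ∈ W) :
    restrictClause (cleanSub σ W) E
      = (restrictClause σ E).filter (fun l => l.1 ∈ W) := by
  ext x
  rw [mem_restrictClause, Finset.mem_filter, mem_restrictClause]
  constructor
  · rintro ⟨m, hm, hx⟩
    rw [appLit_cleanSub (hE m hm)] at hx
    rcases hs : appLit σ m with b | l
    · rw [hs] at hx; exact absurd hx (by simp)
    · rw [hs] at hx
      simp only at hx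
      by_cases hl : l.1 ∈ W
      · rw [if_pos hl] at hx
        obtain rfl : l = x := Sum.inr.inj hx
        exact ⟨⟨m, hm, hs⟩, hl⟩
      · rw [if_neg hl] at hx; exact absurd hx (by simp)
  · rintro ⟨⟨m, hm, hx⟩, hxW⟩
    exact ⟨m, hm, appLit_cleanSub_inr_mem (hE m hm) hx hxW⟩

lemma cleanSub_out_pos {σ : Sub} {W : Finset Var} {E : Clause}
    (hE : ∀ m ∈ E, m.1 ∈ W) (h : ¬ clauseTrue (cleanSub σ W) E) :
    ∀ l ∈ restrictClause σ E, l.1 ∉ W → l.2 = true := by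
  intro l hl hlW
  rcases mem_restrictClause.1 hl with ⟨m, hm, hx⟩
  by_contra hb
  have hb' : l.2 = false := by
    cases hval : l.2
    · rfl
    · exact absurd hval hb
  apply h
  refine ⟨m, hm, ?_⟩
  rw [appLit_cleanSub_inr_not (hE m hm) hx hlW, hb']
  rfl

lemma comp_cleanSub (σ : Sub) (W : Finset Var) (τ : TAssign) (v : Var) :
    comp τ (cleanSub σ W) v =
      if v ∈ W then comp (fun w => if w ∈ W then τ w else false) σ v else τ v := by
  by_cases hv : v ∈ W
  · rcases hs : σ v with b | l
    · simp [comp, cleanSub, hv, hs]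
    · by_cases hl : l.1 ∈ W
      · simp [comp, cleanSub, hv, hs, hl]
      · obtain ⟨w, p⟩ := l
        simp only at hl
        cases p <;> simp [comp, cleanSub, hv, hs, hl]
  · simp [comp, cleanSub, hv]

end CleanupLemmas5

section CleanupLemmas6

/-- Adding clauses over fresh variables preserves being cost-SR. -/
lemma costSR_add_fresh {B : Finset Var} {Γ Sig : CNF} {C : Clause} {W : Finset Var}
    (hWΓ : varsCNF Γ ⊆ W) (hWC : varsClause C ⊆ W)
    (hfresh : ∀ v ∈ varsCNF Sig, v ∉ W)
    (h : CostSR B Γ C) : CostSR B (Γ + Sig) C := by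
  classical
  obtain ⟨σ, hUP, hcost⟩ := h
  refine ⟨cleanSub σ W, ?_, ?_⟩
  · -- redundancy condition
    intro D hD
    have hSigid : ∀ τ' : Sub, (∀ v, v ∉ W → τ' v = Sum.inr (v, true)) →
        restrictCNF τ' Sig = Sig := by
      intro τ' hτ'
      apply restrictCNF_of_id
      intro E hE m hm
      exact hτ' _ (hfresh _ (varsClause_subset hE (mem_varsClause_of_mem hm)))
    have hprem : restrictCNF (negSub C) (Γ + Sig) = restrictCNF (negSub C) Γ + Sig := by
      rw [restrictCNF_add]
      congr 1
      exact hSigid _ (fun v hv => negSub_id (fun hvc => hv (hWC hvc)))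
    rw [hprem]
    rw [show C ::ₘ (Γ + Sig) = (C ::ₘ Γ) + Sig from (Multiset.cons_add C Γ Sig).symm,
      restrictCNF_add, hSigid _ (fun v hv => cleanSub_id hv)] at hD
    rcases Multiset.mem_add.1 hD with hD | hD
    · -- D comes from C ::ₘ Γ
      rcases mem_restrictCNF_iff.1 hD with ⟨E, hE, hT', rfl⟩
      have hEW : ∀ m ∈ E, m.1 ∈ W := by
        intro m hm
        rcases Multiset.mem_cons.1 hE with rfl | hE'
        · exact hWC (mem_varsClause_of_mem hm)
        · exact hWΓ (varsClause_subset hE' (mem_varsClause_of_mem hm))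
      have hT : ¬ clauseTrue σ E := clauseTrue_cleanSub_of hEW hT'
      have hold : UPFalse (restrictCNF (negSub C) Γ + negUnits (restrictClause σ E)) :=
        hUP _ (mem_restrictCNF hE hT)
      set D := restrictClause (cleanSub σ W) E with hDdef
      set F : Finset Lit := (restrictClause σ E).filter (fun l => l.1 ∉ W) with hFdef
      have hsplit : negUnits (restrictClause σ E)
          = negUnits D + F.val.map (fun l => ({negLit l} : Clause)) := by
        rw [hDdef, restrictClause_cleanSub hEW]
        unfold negUnits
        rw [← Multiset.map_add]
        congr 1
        rw [hFdef, Finset.filter_val, Finset.filter_val, Multiset.filter_add_not]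
      have hUP2 : UPFalse ((restrictCNF (negSub C) Γ + negUnits D)
          + F.val.map (fun l => ({negLit l} : Clause))) := by
        rw [add_assoc, ← hsplit]
        exact hold
      have hΔW : ∀ l ∈ F, l.1 ∉ varsCNF (restrictCNF (negSub C) Γ + negUnits D) := by
        intro l hlF hmem
        have hlW : l.1 ∉ W := (Finset.mem_filter.1 hlF).2
        apply hlW
        rcases mem_varsCNF.1 hmem with ⟨C', hC', hvC'⟩
        rcases Multiset.mem_add.1 hC' with hC' | hC'
        · exact hWΓ (varsCNF_restrict_subset (negSub_tame C) (mem_varsCNF.2 ⟨C', hC', hvC'⟩))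
        · rcases Multiset.mem_map.1 hC' with ⟨l', hl', rfl⟩
          rcases mem_varsClause.1 hvC' with ⟨b, hb⟩
          rw [Finset.mem_singleton] at hb
          have : l.1 = l'.1 := by
            have h5 : ((l.1, b) : Lit).1 = (negLit l').1 := by rw [hb]
            simpa [negLit] using h5
          rw [this]
          have hl'D : l' ∈ D := hl'
          rw [hDdef, restrictClause_cleanSub hEW] at hl'D
          exact (Finset.mem_filter.1 hl'D).2
      have hinj : ∀ l ∈ F, ∀ l' ∈ F, l.1 = l'.1 → l = l' := by
        intro l hl l' hl' hv
        have h1 := cleanSub_out_pos hEW hT' l (Finset.mem_filter.1 hl).1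
          (Finset.mem_filter.1 hl).2
        have h2 := cleanSub_out_pos hEW hT' l' (Finset.mem_filter.1 hl').1
          (Finset.mem_filter.1 hl').2
        exact Prod.ext hv (by rw [h1, h2])
      have hdrop : UPFalse (restrictCNF (negSub C) Γ + negUnits D) :=
        UPFalse_drop_units hUP2 _ F rfl hΔW hinj
      exact UPFalse_mono hdrop (by rw [add_right_comm]; exact Multiset.le_add_right _ _)
    · -- D comes from Sig
      apply UPFalse_self (E := D)
      · exact Multiset.mem_add.2 (Or.inl (Multiset.mem_add.2 (Or.inr hD)))
      · intro m hm
        exact Multiset.mem_add.2 (Or.inr (mem_negUnits hm))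
  · -- cost condition
    intro τ hτ
    set δ : TAssign := fun v => if v ∈ W then τ v else false with hδ
    have hδC : extendsNeg δ C := by
      intro m hm
      have hmW : m.1 ∈ W := hWC (mem_varsClause_of_mem hm)
      simp only [hδ, if_pos hmW]
      exact hτ m hm
    calc cost B (comp τ (cleanSub σ W))
        = cost (B.filter (fun b => b ∈ W)) (comp τ (cleanSub σ W))
          + cost (B.filter (fun b => ¬ b ∈ W)) (comp τ (cleanSub σ W)) :=
          cost_split B (fun b => b ∈ W) _
      _ = cost (B.filter (fun b => b ∈ W)) (comp δ σ)
          + cost (B.filter (fun b => ¬ b ∈ W)) τ := by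
          congr 1
          · apply cost_congr
            intro b hb
            have hbW : b ∈ W := (Finset.mem_filter.1 hb).2
            rw [comp_cleanSub, if_pos hbW]
          · apply cost_congr
            intro b hb
            have hbW : ¬ b ∈ W := (Finset.mem_filter.1 hb).2
            rw [comp_cleanSub, if_neg hbW]
      _ ≤ cost B (comp δ σ) + cost (B.filter (fun b => ¬ b ∈ W)) τ :=
          add_le_add_left (cost_mono (Finset.filter_subset _ _) _) _
      _ ≤ cost B δ + cost (B.filter (fun b => ¬ b ∈ W)) τ :=
          add_le_add_left (hcost δ hδC) _
      _ = cost (B.filter (fun b => b ∈ W)) τ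
          + cost (B.filter (fun b => ¬ b ∈ W)) τ := by
          congr 1
          rw [cost_split B (fun b => b ∈ W) δ,
            cost_false (B.filter (fun b => ¬ b ∈ W))
              (fun b hb => by simp only [hδ, if_neg (Finset.mem_filter.1 hb).2]),
            add_zero]
          apply cost_congr
          intro b hb
          simp only [hδ, if_pos (Finset.mem_filter.1 hb).2]
      _ = cost B τ := (cost_split B (fun b => b ∈ W) τ).symm

end CleanupLemmas6

/-- clean-up lemma: a cost-SR derivation from `Γ` is also a
cost-SR derivation from `Γ ∪ Σ`, provided either (1) no variable of `Σ`
occurs in `Γ ∪ {D₁,…,D_t}`, or (2) every clause of `Σ` is subsumed by a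
clause of `Γ`. -/
theorem cleanup_lemma (B : Finset Var) (Γ Sig : CNF) (L : List Clause)
    (hL : IsDeriv CostSR B Γ L)
    (h : (∀ v ∈ varsCNF Sig, v ∉ varsCNF (Γ + (↑L : CNF))) ∨
         (∀ C ∈ Sig, ∃ C' ∈ Γ, C' ⊆ C)) :
    IsDeriv CostSR B (Γ + Sig) L := by
  intro i hi
  rcases hL i hi with hmem | hweak | hres | ⟨hSR, hvars⟩
  · exact Or.inl (Multiset.mem_add.2 (Or.inl hmem))
  · exact Or.inr (Or.inl hweak)
  · exact Or.inr (Or.inr (Or.inl hres))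
  · refine Or.inr (Or.inr (Or.inr ⟨?_, ?_⟩))
    · have hre : Γ + Sig + (↑(L.take i) : CNF) = (Γ + (↑(L.take i) : CNF)) + Sig := by
        rw [add_right_comm]
      rw [hre]
      rcases h with h1 | h2
      · apply costSR_add_fresh (W := varsCNF (Γ + (↑L : CNF)))
        · apply varsCNF_mono
          apply add_le_add_right
          exact Multiset.coe_le.2 (List.take_sublist i L).subperm
        · apply varsClause_subset
          exact Multiset.mem_add.2 (Or.inr (by exact_mod_cast List.getElem_mem hi))
        · exact h1
        · exact hSR
      · apply costSR_add_subsumed ?_ hSR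
        intro E hE
        obtain ⟨C', hC', hsub⟩ := h2 E hE
        exact ⟨C', Multiset.mem_add.2 (Or.inl hC'), hsub⟩
    · exact hvars.trans (varsCNF_mono (Multiset.le_add_right Γ Sig))


end PaperMaxSAT
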